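/- Let Z be a real-valued random variable on a probability space, define P(x) := P(Z ≥ x) and P(x⁺) := P(Z > x) for x ∈ ℝ, and let V be uniformly distributed on [0,1] and independent of Z. Then the random variable W := P(Z) − V·(P(Z) − P(Z⁺)) (that is, W(ω) = P(z) − V(ω)(P(z) − P(z⁺)) evaluated at z = Z(ω)) is uniformly distributed on [0,1]. -/

import Mathlib

/-!
Write `F z = ν [z, ∞)` and `G z = ν (z, ∞)` for the law `ν` of `Z`. By independence, the law
of `W` is the image of `ν ⊗ Unif[0, 1]` under `(z, v) ↦ F z - v (F z - G z)`, so it suffices to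
compute the mass of each sublevel set `{W ≤ t}`. Let `c = inf {z | F z ≤ t}`. Since `F` is
left-continuous with right limits `G`, we get `G c ≤ t ≤ F c`, and `{W ≤ t}` consists of the
points with `z > c` (mass `G c`) together with the slice `{v | v (F c - G c) ≥ F c - t}` of the
atom at `c` (mass `t - G c`). If `{z | F z ≤ t}` is empty or unbounded below, then `t ≤ 0` or
`t ≥ 1` respectively, and `{W ≤ t}` is null or of full measure.
-/

open MeasureTheory ProbabilityTheory Filter

open Set Function Topology

section Antitone

variable {α β : Type*} [ConditionallyCompleteLinearOrder α] [LinearOrder β]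

theorem Antitone.exists_forall_lt_lt_and_forall_gt_le {f : α → β} (hf : Antitone f) {t : β}
    (hle : ∃ z, f z ≤ t) (hlt : ∃ z, t < f z) :
    ∃ c, (∀ z < c, t < f z) ∧ ∀ z > c, f z ≤ t := by
  obtain ⟨z₀, hz₀⟩ := hlt
  have hbdd : BddBelow {z | f z ≤ t} :=
    ⟨z₀, fun z hz => le_of_not_gt fun hzz₀ => (hz.trans_lt hz₀).not_ge (hf hzz₀.le)⟩
  refine ⟨sInf {z | f z ≤ t}, fun z hz => not_le.1 fun h => notMem_of_lt_csInf hz hbdd h,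
    fun z hz => ?_⟩
  obtain ⟨s, hs, hsz⟩ := exists_lt_of_csInf_lt hle hz
  exact (hf hsz.le).trans hs

end Antitone

section TailMeasure

variable {ν : Measure ℝ} [IsFiniteMeasure ν]

theorem tendsto_measureReal_Ici_atBot :
    Tendsto (fun x => ν.real (Ici x)) atBot (𝓝 (ν.real univ)) :=
  (ENNReal.tendsto_toReal (measure_ne_top ν univ)).comp (tendsto_measure_Ici_atBot ν)

theorem tendsto_measureReal_Ici_atTop : Tendsto (fun x => ν.real (Ici x)) atTop (𝓝 0) := by
  have hempty : ⋂ x : ℝ, Ici x = ∅ :=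
    eq_empty_of_forall_notMem fun x hx => (mem_iInter.1 hx (x + 1)).not_gt (lt_add_one x)
  have := (ENNReal.tendsto_toReal (measure_ne_top ν _)).comp
    (tendsto_measure_iInter_atTop (fun _ => measurableSet_Ici.nullMeasurableSet) antitone_Ici
      ⟨0, measure_ne_top ν _⟩)
  rw [hempty, measure_empty, ENNReal.toReal_zero] at this
  exact this

theorem measureReal_Ioi_le_of_forall_gt {c t : ℝ} (h : ∀ x > c, ν.real (Ici x) ≤ t) :
    ν.real (Ioi c) ≤ t := by
  obtain ⟨u, hu_anti, hu_gt, hu_lim⟩ := exists_seq_strictAnti_tendsto c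
  have hmono : Monotone fun n => Ici (u n) := fun _ _ hmn => Ici_subset_Ici.2 (hu_anti.antitone hmn)
  have := (ENNReal.tendsto_toReal (measure_ne_top ν _)).comp (tendsto_measure_iUnion_atTop hmono)
  rw [iUnion_Ici_eq_Ioi_of_lt_of_tendsto hu_gt hu_lim] at this
  exact le_of_tendsto' this fun n => h _ (hu_gt n)

theorem le_measureReal_Ici_of_forall_lt {c t : ℝ} (h : ∀ x < c, t ≤ ν.real (Ici x)) :
    t ≤ ν.real (Ici c) := by
  obtain ⟨u, hu_mono, hu_lt, hu_lim⟩ := exists_seq_strictMono_tendsto c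
  have hanti : Antitone fun n => Ici (u n) := fun _ _ hmn => Ici_subset_Ici.2 (hu_mono.monotone hmn)
  have hinter : ⋂ n, Ici (u n) = Ici c := by
    ext x
    simp only [mem_iInter, mem_Ici]
    exact ⟨fun hx => le_of_tendsto' hu_lim hx, fun hx n => (hu_lt n).le.trans hx⟩
  have := (ENNReal.tendsto_toReal (measure_ne_top ν _)).comp
    (tendsto_measure_iInter_atTop (fun _ => measurableSet_Ici.nullMeasurableSet) hanti
      ⟨0, measure_ne_top ν _⟩)
  rw [hinter] at this
  exact ge_of_tendsto' this fun n => h _ (hu_lt n)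

end TailMeasure

noncomputable def distributionalTransform (ν : Measure ℝ) (z v : ℝ) : ℝ :=
  ν.real (Ici z) - v * (ν.real (Ici z) - ν.real (Ioi z))

section DistributionalTransform

variable {ν : Measure ℝ} [IsFiniteMeasure ν]

theorem measureReal_Ioi_le_measureReal_Ici (z : ℝ) : ν.real (Ioi z) ≤ ν.real (Ici z) :=
  measureReal_mono Ioi_subset_Ici_self

theorem measureReal_Ioi_le_distributionalTransform {z v : ℝ} (hv : v ∈ Icc (0 : ℝ) 1) :
    ν.real (Ioi z) ≤ distributionalTransform ν z v := by
  have := measureReal_Ioi_le_measureReal_Ici (ν := ν) z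
  unfold distributionalTransform
  nlinarith [hv.2]

theorem distributionalTransform_le_measureReal_Ici {z v : ℝ} (hv : v ∈ Icc (0 : ℝ) 1) :
    distributionalTransform ν z v ≤ ν.real (Ici z) := by
  have := measureReal_Ioi_le_measureReal_Ici (ν := ν) z
  unfold distributionalTransform
  nlinarith [hv.1]

theorem antitone_measureReal_Ici : Antitone fun z => ν.real (Ici z) :=
  fun _ _ h => measureReal_mono (Ici_subset_Ici.2 h)

theorem antitone_measureReal_Ioi : Antitone fun z => ν.real (Ioi z) :=
  fun _ _ h => measureReal_mono (Ioi_subset_Ioi h)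

theorem measurable_distributionalTransform :
    Measurable (uncurry (distributionalTransform ν)) :=
  have hF := antitone_measureReal_Ici.measurable.comp measurable_fst
  have hG := antitone_measureReal_Ioi.measurable.comp measurable_fst
  hF.sub (measurable_snd.mul (hF.sub hG))

end DistributionalTransform

theorem MeasureTheory.Measure.prod_restrict_right_apply {α β : Type*} [MeasurableSpace α]
    [MeasurableSpace β] {μ : Measure α} {ν : Measure β} [SFinite μ] [SFinite ν] {t : Set β}
    {s : Set (α × β)} (hs : MeasurableSet s) :
    μ.prod (ν.restrict t) s = μ.prod ν (s ∩ univ ×ˢ t) := by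
  rw [← Measure.restrict_univ (μ := μ), Measure.prod_restrict, Measure.restrict_univ,
    Measure.restrict_apply hs]

theorem volume_restrict_Icc_Iic (t : ℝ) :
    volume.restrict (Icc (0 : ℝ) 1) (Iic t) = ENNReal.ofReal (min t 1) := by
  have : Iic t ∩ Icc 0 1 = Icc 0 (min t 1) := by
    ext x
    simp only [mem_inter_iff, mem_Iic, mem_Icc, le_min_iff]
    tauto
  rw [Measure.restrict_apply measurableSet_Iic, this, Real.volume_Icc, sub_zero]

theorem ofReal_mul_volume_Icc_inter_setOf_le_mul {d e : ℝ} (he : 0 ≤ e) (hed : e ≤ d) :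
    ENNReal.ofReal d * volume (Icc (0 : ℝ) 1 ∩ {v | e ≤ v * d}) = ENNReal.ofReal (d - e) := by
  rcases (he.trans hed).eq_or_lt with rfl | hd
  · rw [le_antisymm hed he, ENNReal.ofReal_zero, zero_mul, sub_zero, ENNReal.ofReal_zero]
  · have hset : Icc (0 : ℝ) 1 ∩ {v | e ≤ v * d} = Icc (e / d) 1 := by
      ext v
      simp only [mem_inter_iff, mem_Icc, mem_ofPred_eq, div_le_iff₀ hd]
      constructor
      · rintro ⟨⟨-, hv⟩, hev⟩
        exact ⟨hev, hv⟩
      · rintro ⟨hev, hv⟩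
        exact ⟨⟨nonneg_of_mul_nonneg_left (he.trans hev) hd, hv⟩, hev⟩
    rw [hset, Real.volume_Icc, ← ENNReal.ofReal_mul hd.le, mul_sub, mul_one,
      mul_div_cancel₀ _ hd.ne']

section Sublevel

variable {ν : Measure ℝ} [IsFiniteMeasure ν] {t : ℝ}

theorem prod_preimage_distributionalTransform_Iic_eq_zero (h : ∀ z, t < ν.real (Ici z)) :
    ν.prod (volume.restrict (Icc (0 : ℝ) 1)) (uncurry (distributionalTransform ν) ⁻¹' Iic t)
      = 0 := by
  have hempty : uncurry (distributionalTransform ν) ⁻¹' Iic t ∩ univ ×ˢ Icc 0 1 = ∅ := by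
    refine eq_empty_of_forall_notMem fun ⟨z, v⟩ ⟨hle, _, hv⟩ => ?_
    have hG : t < ν.real (Ioi z) :=
      (h (z + 1)).trans_le (measureReal_mono (Ici_subset_Ioi.2 (lt_add_one z)))
    exact (hG.trans_le (measureReal_Ioi_le_distributionalTransform hv)).not_ge hle
  rw [Measure.prod_restrict_right_apply
      (measurable_distributionalTransform measurableSet_Iic),
    hempty, measure_empty]

theorem prod_preimage_distributionalTransform_Iic_eq_one [IsProbabilityMeasure ν]
    (h : ∀ z, ν.real (Ici z) ≤ t) :
    ν.prod (volume.restrict (Icc (0 : ℝ) 1)) (uncurry (distributionalTransform ν) ⁻¹' Iic t)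
      = 1 := by
  have huniv : uncurry (distributionalTransform ν) ⁻¹' Iic t ∩ univ ×ˢ Icc 0 1
      = univ ×ˢ Icc 0 1 :=
    inter_eq_right.2 fun ⟨z, _⟩ ⟨_, hv⟩ =>
      (distributionalTransform_le_measureReal_Ici hv).trans (h z)
  rw [Measure.prod_restrict_right_apply
      (measurable_distributionalTransform measurableSet_Iic),
    huniv, Measure.prod_prod, measure_univ, Real.volume_Icc, sub_zero, ENNReal.ofReal_one,
    one_mul]

theorem prod_preimage_distributionalTransform_Iic_eq_ofReal {c : ℝ}
    (hlt : ∀ z < c, t < ν.real (Ici z)) (hgt : ∀ z > c, ν.real (Ici z) ≤ t) :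
    ν.prod (volume.restrict (Icc (0 : ℝ) 1)) (uncurry (distributionalTransform ν) ⁻¹' Iic t)
      = ENNReal.ofReal t := by
  set F := ν.real (Ici c)
  set G := ν.real (Ioi c)
  have hGt : G ≤ t := measureReal_Ioi_le_of_forall_gt hgt
  have htF : t ≤ F := le_measureReal_Ici_of_forall_lt fun z hz => (hlt z hz).le
  have hlt' : ∀ z < c, t < ν.real (Ioi z) := fun z hz => by
    obtain ⟨m, hzm, hmc⟩ := exists_between hz
    exact (hlt m hmc).trans_le (measureReal_mono (Ici_subset_Ioi.2 hzm))
  set J := Icc (0 : ℝ) 1 ∩ {v | F - t ≤ v * (F - G)}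
  have hset : uncurry (distributionalTransform ν) ⁻¹' Iic t ∩ univ ×ˢ Icc 0 1
      = Ioi c ×ˢ Icc 0 1 ∪ {c} ×ˢ J := by
    ext ⟨z, v⟩
    simp only [mem_inter_iff, mem_preimage, uncurry_apply_pair, mem_Iic, mem_prod, mem_univ,
      true_and, mem_union, mem_Ioi, mem_singleton_iff, J, mem_ofPred_eq]
    rcases lt_trichotomy z c with hz | rfl | hz
    · simp only [hz.not_gt, hz.ne, false_and, or_false, iff_false, not_and]
      exact fun hle hv =>
        ((hlt' z hz).trans_le (measureReal_Ioi_le_distributionalTransform hv)).not_ge hle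
    · rw [distributionalTransform, sub_le_comm]
      simp only [lt_irrefl, false_and, true_and, false_or]
      exact and_comm
    · simp only [hz, hz.ne', true_and, false_and, or_false]
      exact ⟨And.right, fun hv =>
        ⟨(distributionalTransform_le_measureReal_Ici hv).trans (hgt z hz), hv⟩⟩
  have hdisj : Disjoint (Ioi c ×ˢ Icc (0 : ℝ) 1) ({c} ×ˢ J) :=
    (disjoint_singleton_right.2 (lt_irrefl c)).set_prod_left _ _
  have hJ : MeasurableSet J :=
    measurableSet_Icc.inter (measurableSet_le measurable_const (measurable_id.mul_const _))
  have hsingleton : ν {c} = ENNReal.ofReal (F - G) := by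
    rw [← ofReal_measureReal, ← Icc_self, ← Ici_sdiff_Ioi,
      measureReal_sdiff Ioi_subset_Ici_self measurableSet_Ioi]
  rw [Measure.prod_restrict_right_apply
      (measurable_distributionalTransform measurableSet_Iic),
    hset, measure_union hdisj ((measurableSet_singleton c).prod hJ), Measure.prod_prod,
    Measure.prod_prod, Real.volume_Icc, sub_zero, ENNReal.ofReal_one, mul_one, hsingleton,
    ofReal_mul_volume_Icc_inter_setOf_le_mul (sub_nonneg.2 htF) (by linarith),
    ← ofReal_measureReal, ← ENNReal.ofReal_add measureReal_nonneg (by linarith)]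
  congr 1
  ring

end Sublevel

theorem map_distributionalTransform_prod_uniform (ν : Measure ℝ) [IsProbabilityMeasure ν] :
    (ν.prod (volume.restrict (Icc (0 : ℝ) 1))).map (uncurry (distributionalTransform ν))
      = volume.restrict (Icc (0 : ℝ) 1) := by
  refine Measure.ext_of_Iic _ _ fun t => ?_
  rw [Measure.map_apply measurable_distributionalTransform measurableSet_Iic,
    volume_restrict_Icc_Iic]
  by_cases hle : ∃ z, ν.real (Ici z) ≤ t
  · by_cases hlt : ∃ z, t < ν.real (Ici z)
    · obtain ⟨c, hc_lt, hc_gt⟩ :=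
        antitone_measureReal_Ici.exists_forall_lt_lt_and_forall_gt_le hle hlt
      have ht1 : t ≤ 1 :=
        (le_measureReal_Ici_of_forall_lt fun z hz => (hc_lt z hz).le).trans measureReal_le_one
      rw [prod_preimage_distributionalTransform_Iic_eq_ofReal hc_lt hc_gt, min_eq_left ht1]
    · push Not at hlt
      have ht1 : 1 ≤ t :=
        probReal_univ.ge.trans (le_of_tendsto' tendsto_measureReal_Ici_atBot hlt)
      rw [prod_preimage_distributionalTransform_Iic_eq_one hlt, min_eq_right ht1,
        ENNReal.ofReal_one]
  · push Not at hle
    have ht0 : t ≤ 0 := ge_of_tendsto' tendsto_measureReal_Ici_atTop fun z => (hle z).le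
    rw [prod_preimage_distributionalTransform_Iic_eq_zero hle,
      ENNReal.ofReal_of_nonpos (min_le_of_left_le ht0)]

/-- **Distributional transform (key step of Lemma 4.9).** Let `P(x) = P(Z ≥ x)`
and `P(x⁺) = P(Z > x)`, and let `V` be uniform on `[0,1]` independent of `Z`.
Then `W = P(Z) - V·(P(Z) - P(Z⁺))` is uniformly distributed on `[0,1]`. -/
theorem distributional_transform_uniform
    {Ω : Type*} [MeasurableSpace Ω] (μ : Measure Ω) [IsProbabilityMeasure μ]
    (Z V : Ω → ℝ) (hZ : Measurable Z) (hV : Measurable V)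
    (hVunif : Measure.map V μ = volume.restrict (Set.Icc (0:ℝ) 1))
    (hindep : IndepFun Z V μ) :
    Measure.map (fun ω =>
        (μ {ω' | Z ω ≤ Z ω'}).toReal -
          V ω * ((μ {ω' | Z ω ≤ Z ω'}).toReal - (μ {ω' | Z ω < Z ω'}).toReal)) μ
      = volume.restrict (Set.Icc (0:ℝ) 1) := by
  have : IsProbabilityMeasure (μ.map Z) := Measure.isProbabilityMeasure_map hZ.aemeasurable
  have hlaw :
      μ.map (fun ω => (Z ω, V ω)) = (μ.map Z).prod (volume.restrict (Icc (0 : ℝ) 1)) := by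
    rw [← hVunif]
    exact (indepFun_iff_map_prod_eq_prod_map_map hZ.aemeasurable hV.aemeasurable).1 hindep
  have hW : (fun ω => (μ {ω' | Z ω ≤ Z ω'}).toReal -
        V ω * ((μ {ω' | Z ω ≤ Z ω'}).toReal - (μ {ω' | Z ω < Z ω'}).toReal))
      = uncurry (distributionalTransform (μ.map Z)) ∘ fun ω => (Z ω, V ω) := by
    funext ω
    simp only [comp_apply, uncurry_apply_pair, distributionalTransform,
      map_measureReal_apply hZ measurableSet_Ici, map_measureReal_apply hZ measurableSet_Ioi]
    rfl
  rw [hW, ← Measure.map_map measurable_distributionalTransform (hZ.prodMk hV), hlaw,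
    map_distributionalTransform_prod_uniform]
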